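/- arXiv:2511.06645 — 2 statements merged into one kernel-verified Lean document; each statement's English description precedes it below -/
import Mathlib

section
/- Fix a probability vector μ on {1,...,V}, let π be a uniformly random permutation of {1,...,V} and u ~ Unif[0,1] independent of π, and let Y = Γ((π,u),μ) be the ITS output. Then E[u | Y, π(Y)] = 1/2 + (1 - μ(Y))·((π(Y) - 1)/(V - 1) - 1/2), where the conditioning is on the value of Y and on the rank π(Y). -/
open MeasureTheory ProbabilityTheory
open scoped ENNReal

/-- The inverse transform sampling decoder. -/
noncomputable def GammaITS (V : ℕ) [NeZero V] (μp : Fin V → ℝ)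
    (π : Equiv.Perm (Fin V)) (u : ℝ) : Fin V :=
  π.symm
    ((Finset.univ.filter (fun r : Fin V =>
        u ≤ ∑ j ∈ Finset.univ.filter (fun j => π j ≤ r), μp j)).min.untopD default)

/-!
Given `π = p` with `p k = r`, the decoder outputs `k` exactly when `u` lies in the interval
`(a_p, a_p + μ k]`, where `a_p` is the mass of the tokens ranked below `r`. As `u` is uniform and
independent of `π`, the integral of `u` over this event is `μ k * (a_p + μ k / 2)` times the
probability `1 / V!` of `π = p`. Among the permutations with `p k = r`, every other token is
ranked below `r` equally often, hence in a fraction `r / (V - 1)` of them, so `a_p` averages to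
`(1 - μ k) * r / (V - 1)`.

The fibres `{π = p}` have outer measures adding up to one, which makes them null-measurable, so
`μ` splits as the sum of its restrictions to them.
-/

section Decoder

open Finset

variable {V : ℕ} (μp : Fin V → ℝ) (p : Equiv.Perm (Fin V))

noncomputable def rankCumMass (s : Fin V) : ℝ := ∑ j with p j ≤ s, μp j

noncomputable def rankMassBelow (r : Fin V) : ℝ := ∑ j with p j < r, μp j

variable {μp p}

lemma rankCumMass_top [NeZero V] (hsum : ∑ j, μp j = 1) : rankCumMass μp p ⊤ = 1 := by
  simp [rankCumMass, hsum]

lemma rankCumMass_of_apply_eq {k r : Fin V} (hk : p k = r) :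
    rankCumMass μp p r = rankMassBelow μp p r + μp k := by
  have : univ.filter (fun j => p j ≤ r) = insert k (univ.filter fun j => p j < r) := by
    ext j
    simp only [mem_filter, mem_univ, true_and, mem_insert, le_iff_lt_or_eq, ← hk,
      p.injective.eq_iff]
    tauto
  rw [rankCumMass, this, sum_insert (by simp [hk]), add_comm, rankMassBelow]

lemma rankMassBelow_nonneg (hμp : ∀ j, 0 ≤ μp j) (r : Fin V) : 0 ≤ rankMassBelow μp p r :=
  sum_nonneg fun j _ => hμp j

lemma rankMassBelow_add_le_one (hμp : ∀ j, 0 ≤ μp j) (hsum : ∑ j, μp j = 1) {k r : Fin V}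
    (hk : p k = r) : rankMassBelow μp p r + μp k ≤ 1 := by
  rw [← rankCumMass_of_apply_eq hk, ← hsum]
  exact sum_le_sum_of_subset_of_nonneg (subset_univ _) fun j _ _ => hμp j

lemma Ioc_rankMassBelow_subset (hμp : ∀ j, 0 ≤ μp j) (hsum : ∑ j, μp j = 1) {k r : Fin V}
    (hk : p k = r) :
    Set.Ioc (rankMassBelow μp p r) (rankMassBelow μp p r + μp k) ⊆ Set.Ioc 0 1 :=
  Set.Ioc_subset_Ioc (rankMassBelow_nonneg hμp r) (rankMassBelow_add_le_one hμp hsum hk)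

lemma forall_lt_rankCumMass_lt_iff (hμp : ∀ j, 0 ≤ μp j) {r : Fin V} {x : ℝ} (hx : 0 < x) :
    (∀ s < r, rankCumMass μp p s < x) ↔ rankMassBelow μp p r < x := by
  by_cases hr : IsMin r
  · have : rankMassBelow μp p r = 0 := sum_eq_zero fun j hj => by
      simp only [mem_filter, mem_univ, true_and] at hj
      exact absurd hj hr.not_lt
    simp only [this, hx, iff_true]
    exact fun s hs => absurd hs hr.not_lt
  · have hpred : rankMassBelow μp p r = rankCumMass μp p (Order.pred r) := by
      simp only [rankMassBelow, rankCumMass, Order.le_pred_iff_of_not_isMin hr]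
    refine ⟨fun h => hpred ▸ h _ (Order.pred_lt_of_not_isMin hr), fun h s hs => ?_⟩
    refine lt_of_le_of_lt (sum_le_sum_of_subset_of_nonneg ?_ fun j _ _ => hμp j) h
    intro j hj
    simp only [mem_filter, mem_univ, true_and] at hj ⊢
    exact hj.trans_lt hs

lemma gammaITS_eq_iff [NeZero V] (hμp : ∀ j, 0 ≤ μp j) (hsum : ∑ j, μp j = 1) {k r : Fin V}
    (hk : p k = r) {x : ℝ} (hx : x ∈ Set.Ioc 0 1) :
    GammaITS V μp p x = k ↔
      x ∈ Set.Ioc (rankMassBelow μp p r) (rankMassBelow μp p r + μp k) := by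
  set S : Finset (Fin V) := {s | x ≤ rankCumMass μp p s}
  have hS : S.Nonempty := ⟨⊤, by simp [S, rankCumMass_top hsum, hx.2]⟩
  have hΓ : GammaITS V μp p x = p.symm (S.min' hS) := by
    change p.symm (S.min.untopD default) = _
    rw [← coe_min' hS, WithTop.untopD_coe]
  rw [hΓ, Equiv.symm_apply_eq, hk, min'_eq_iff, Set.mem_Ioc,
    ← forall_lt_rankCumMass_lt_iff hμp hx.1, ← rankCumMass_of_apply_eq hk, and_comm]
  simp only [S, mem_filter, mem_univ, true_and]
  refine and_congr_left' (forall_congr' fun s => ?_)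
  rw [← not_imp_not, not_le, not_le]

lemma card_filter_apply_lt (r : Fin V) : #{j | p j < r} = r := by
  rw [← Fin.card_Iio r]
  exact card_equiv p fun j => by simp

lemma card_filter_apply_eq_and_apply_lt_congr {k j j' : Fin V} (hj : j ≠ k) (hj' : j' ≠ k)
    (r : Fin V) :
    #{q : Equiv.Perm (Fin V) | q k = r ∧ q j < r}
      = #{q : Equiv.Perm (Fin V) | q k = r ∧ q j' < r} :=
  card_equiv (Equiv.mulRight (Equiv.swap j j')) fun q => by
    simp [Equiv.swap_apply_of_ne_of_ne hj.symm hj'.symm]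

lemma sum_card_filter_apply_eq_and_apply_lt (k r : Fin V) :
    ∑ j, #{q : Equiv.Perm (Fin V) | q k = r ∧ q j < r}
      = r * #{q : Equiv.Perm (Fin V) | q k = r} := by
  calc ∑ j, #{q : Equiv.Perm (Fin V) | q k = r ∧ q j < r}
      = ∑ j, ∑ q : Equiv.Perm (Fin V) with q k = r, if q j < r then 1 else 0 := by
        simp only [← filter_filter, card_filter]
    _ = ∑ q : Equiv.Perm (Fin V) with q k = r, #{j | q j < r} := by
        rw [sum_comm]
        simp only [card_filter]
    _ = r * #{q : Equiv.Perm (Fin V) | q k = r} := by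
        simp [card_filter_apply_lt, mul_comm]

lemma card_filter_apply_eq_and_apply_lt {k j : Fin V} (hj : j ≠ k) (r : Fin V) :
    (#{q : Equiv.Perm (Fin V) | q k = r ∧ q j < r} : ℝ)
      = r * #{q : Equiv.Perm (Fin V) | q k = r} / (V - 1) := by
  have hself : #{q : Equiv.Perm (Fin V) | q k = r ∧ q k < r} = 0 :=
    card_eq_zero.mpr (filter_eq_empty_iff.mpr fun q _ h => h.2.ne h.1)
  have hcount : #(univ.erase k) * #{q : Equiv.Perm (Fin V) | q k = r ∧ q j < r}
      = r * #{q : Equiv.Perm (Fin V) | q k = r} := by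
    rw [← sum_card_filter_apply_eq_and_apply_lt k r,
      ← sum_erase univ (f := fun i => #{q : Equiv.Perm (Fin V) | q k = r ∧ q i < r}) hself,
      ← smul_eq_mul, ← sum_const]
    exact sum_congr rfl fun i hi =>
      card_filter_apply_eq_and_apply_lt_congr hj (ne_of_mem_erase hi) r
  have hcard : (#(univ.erase k) : ℝ) = V - 1 := by
    rw [card_erase_of_mem (mem_univ k), card_univ, Fintype.card_fin,
      Nat.cast_pred (Fin.pos k)]
  have hV : (V : ℝ) - 1 ≠ 0 := by
    rw [← hcard, Nat.cast_ne_zero, ← pos_iff_ne_zero, card_pos]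
    exact ⟨j, mem_erase.mpr ⟨hj, mem_univ j⟩⟩
  rw [eq_div_iff hV, ← hcard, mul_comm]
  exact_mod_cast hcount

lemma sum_rankMassBelow (w : Fin V → ℝ) (k r : Fin V) :
    ∑ q : Equiv.Perm (Fin V) with q k = r, rankMassBelow w q r
      = r * #{q : Equiv.Perm (Fin V) | q k = r} / (V - 1) * ∑ j ∈ univ.erase k, w j := by
  unfold rankMassBelow
  rw [sum_comm' (t' := univ.erase k) (s' := fun j => {q | q k = r ∧ q j < r}), mul_sum]
  · refine sum_congr rfl fun j hj => ?_
    rw [sum_const, nsmul_eq_mul, card_filter_apply_eq_and_apply_lt (ne_of_mem_erase hj)]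
  · intro q j
    simp only [mem_filter, mem_univ, true_and, mem_erase, and_true]
    constructor
    · rintro ⟨hq, hj⟩
      exact ⟨⟨hq, hj⟩, fun hjk => (hjk ▸ hj).ne hq⟩
    · exact fun h => h.1

end Decoder

section Fibers

variable {Ω : Type*} [MeasurableSpace Ω] {μ : Measure Ω}

lemma map_restrict_eq_smul_map_of_indep {β : Type*} [MeasurableSpace β] {u : Ω → β}
    (hu : Measurable u) {S : Set Ω}
    (h : ∀ s, MeasurableSet s → μ (S ∩ u ⁻¹' s) = μ S * μ (u ⁻¹' s)) :
    (μ.restrict S).map u = μ S • μ.map u := by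
  ext s hs
  rw [Measure.map_apply hu hs, Measure.restrict_apply (hu hs), Set.inter_comm, h s hs,
    Measure.smul_apply, Measure.map_apply hu hs, smul_eq_mul]

variable [IsFiniteMeasure μ]

lemma nullMeasurableSet_of_measure_add_measure_compl_le {s : Set Ω}
    (h : μ s + μ sᶜ ≤ μ Set.univ) : NullMeasurableSet s μ := by
  set t := toMeasurable μ s
  have hst : s ⊆ t := subset_toMeasurable μ s
  have ht : MeasurableSet t := measurableSet_toMeasurable μ s
  have hcompl : μ (sᶜ ∩ t) + μ tᶜ = μ sᶜ := by
    rw [← measure_inter_add_sdiff sᶜ ht, Set.sdiff_eq,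
      Set.inter_eq_right.mpr (Set.compl_subset_compl.mpr hst)]
  have huniv : μ Set.univ = μ s + μ tᶜ := by
    rw [← measure_add_measure_compl ht, measure_toMeasurable]
  have hnull : μ (sᶜ ∩ t) = 0 := by
    rw [← hcompl, huniv] at h
    have h' : μ (sᶜ ∩ t) + (μ s + μ tᶜ) ≤ 0 + (μ s + μ tᶜ) := by
      rw [zero_add]
      convert h using 1
      ring
    exact nonpos_iff_eq_zero.mp ((ENNReal.add_le_add_iff_right (by finiteness)).mp h')
  refine ht.nullMeasurableSet.congr (ae_eq_set.mpr ⟨?_, by simp [Set.sdiff_eq_empty.mpr hst]⟩)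
  rwa [Set.sdiff_eq, Set.inter_comm]

lemma nullMeasurableSet_fiber_of_sum_le {ι : Type*} [Fintype ι] {f : Ω → ι}
    (h : ∑ i, μ {ω | f ω = i} ≤ μ Set.univ) (i : ι) :
    NullMeasurableSet {ω | f ω = i} μ := by
  classical
  refine nullMeasurableSet_of_measure_add_measure_compl_le (le_trans ?_ h)
  rw [← Finset.add_sum_erase _ _ (Finset.mem_univ i)]
  gcongr
  refine (measure_mono fun ω hω => ?_).trans (measure_biUnion_finset_le _ _)
  exact Set.mem_biUnion (Finset.mem_erase.mpr ⟨hω, Finset.mem_univ _⟩) rfl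

lemma sum_restrict_fiber_of_sum_le {ι : Type*} [Fintype ι] {f : Ω → ι}
    (h : ∑ i, μ {ω | f ω = i} ≤ μ Set.univ) : ∑ i, μ.restrict {ω | f ω = i} = μ := by
  have hd : Pairwise fun i j => AEDisjoint μ {ω | f ω = i} {ω | f ω = j} := fun i j hij =>
    (Set.disjoint_left.mpr fun ω hi hj => hij (hi.symm.trans hj)).aedisjoint
  rw [← Measure.sum_fintype,
    ← Measure.restrict_iUnion_ae hd (nullMeasurableSet_fiber_of_sum_le h),
    Set.iUnion_eq_univ_iff.mpr fun ω => ⟨f ω, rfl⟩, Measure.restrict_univ]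

lemma setIntegral_eq_sum_restrict_fiber {ι : Type*} [Fintype ι] {f : Ω → ι}
    (h : ∑ i, μ {ω | f ω = i} ≤ μ Set.univ) {g : Ω → ℝ} (hg : Integrable g μ)
    (E : Set Ω) :
    ∫ ω in E, g ω ∂μ = ∑ i, ∫ ω in E, g ω ∂μ.restrict {ω | f ω = i} := by
  conv_lhs => rw [← sum_restrict_fiber_of_sum_le h]
  rw [← Measure.restrictₗ_apply, map_sum]
  exact integral_finsetSum_measure fun i _ => hg.restrict.restrict

lemma measure_eq_sum_restrict_fiber {ι : Type*} [Fintype ι] {f : Ω → ι}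
    (h : ∑ i, μ {ω | f ω = i} ≤ μ Set.univ) (E : Set Ω) :
    μ E = ∑ i, μ.restrict {ω | f ω = i} E := by
  conv_lhs => rw [← sum_restrict_fiber_of_sum_le h]
  rw [Measure.coe_finsetSum, Finset.sum_apply]

end Fibers

section Event

variable {Ω : Type*} [MeasurableSpace Ω] {ν : Measure Ω} {V : ℕ} [NeZero V]
  {μp : Fin V → ℝ} {π : Ω → Equiv.Perm (Fin V)} {u : Ω → ℝ} {p : Equiv.Perm (Fin V)}
  {c : ℝ≥0∞}

lemma itsEvent_ae_eq (hμp : ∀ j, 0 ≤ μp j) (hsum : ∑ j, μp j = 1) (k r : Fin V)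
    (hπ : ∀ᵐ ω ∂ν, π ω = p) (hu01 : ∀ᵐ ω ∂ν, u ω ∈ Set.Ioc 0 1) :
    {ω | GammaITS V μp (π ω) (u ω) = k ∧ π ω k = r} =ᵐ[ν]
      u ⁻¹' {x | p k = r ∧
        x ∈ Set.Ioc (rankMassBelow μp p r) (rankMassBelow μp p r + μp k)} := by
  refine Filter.eventuallyEq_set.mpr ?_
  filter_upwards [hπ, hu01] with ω hπω hω
  simp only [Set.mem_ofPred_eq, Set.mem_preimage, hπω]
  by_cases hk : p k = r
  · simp only [hk, and_true, true_and, gammaITS_eq_iff hμp hsum hk hω]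
  · simp [hk]

lemma ae_mem_Ioc_of_map_eq (hu : Measurable u)
    (hlaw : ν.map u = c • volume.restrict (Set.Ioc 0 1)) :
    ∀ᵐ ω ∂ν, u ω ∈ Set.Ioc 0 1 :=
  ae_of_ae_map hu.aemeasurable
    (hlaw ▸ Measure.ae_smul_measure (ae_restrict_mem measurableSet_Ioc) c)

lemma setIntegral_itsEvent (hu : Measurable u)
    (hlaw : ν.map u = c • volume.restrict (Set.Ioc 0 1))
    (hμp : ∀ j, 0 ≤ μp j) (hsum : ∑ j, μp j = 1) (k r : Fin V)
    (hπ : ∀ᵐ ω ∂ν, π ω = p) :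
    ∫ ω in {ω | GammaITS V μp (π ω) (u ω) = k ∧ π ω k = r}, u ω ∂ν
      = c.toReal * if p k = r then μp k * rankMassBelow μp p r + μp k ^ 2 / 2 else 0 := by
  rw [setIntegral_congr_set (itsEvent_ae_eq hμp hsum k r hπ (ae_mem_Ioc_of_map_eq hu hlaw))]
  by_cases hk : p k = r
  · simp only [hk, true_and, if_true, Set.ofPred_mem_eq]
    rw [← setIntegral_map (f := fun x => x) measurableSet_Ioc aestronglyMeasurable_id
        hu.aemeasurable, hlaw, Measure.restrict_smul, integral_smul_measure,
      Measure.restrict_restrict measurableSet_Ioc,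
      Set.inter_eq_left.mpr (Ioc_rankMassBelow_subset hμp hsum hk),
      ← intervalIntegral.integral_of_le (by linarith [hμp k]), integral_id]
    ring
  · simp [hk]

lemma measure_itsEvent (hu : Measurable u)
    (hlaw : ν.map u = c • volume.restrict (Set.Ioc 0 1))
    (hμp : ∀ j, 0 ≤ μp j) (hsum : ∑ j, μp j = 1) (k r : Fin V)
    (hπ : ∀ᵐ ω ∂ν, π ω = p) :
    ν {ω | GammaITS V μp (π ω) (u ω) = k ∧ π ω k = r}
      = c * if p k = r then ENNReal.ofReal (μp k) else 0 := by
  rw [measure_congr (itsEvent_ae_eq hμp hsum k r hπ (ae_mem_Ioc_of_map_eq hu hlaw))]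
  by_cases hk : p k = r
  · simp only [hk, true_and, if_true, Set.ofPred_mem_eq]
    rw [← Measure.map_apply hu measurableSet_Ioc, hlaw, Measure.smul_apply, smul_eq_mul,
      Measure.restrict_apply measurableSet_Ioc,
      Set.inter_eq_left.mpr (Ioc_rankMassBelow_subset hμp hsum hk), Real.volume_Ioc,
      add_sub_cancel_left]
  · simp [hk]

end Event

-- Ranks are `0`-based: `r : Fin V` stands for the paper's `π(Y) - 1`.
theorem its_conditional_mean_u_general
    {Ω : Type*} [MeasurableSpace Ω] (μ : Measure Ω) [IsProbabilityMeasure μ]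
    (V : ℕ) [NeZero V]
    (μp : Fin V → ℝ) (hμp : ∀ k, 0 ≤ μp k) (hsum : ∑ k, μp k = 1)
    (π : Ω → Equiv.Perm (Fin V)) (u : Ω → ℝ) (hu : Measurable u)
    (hunif : Measure.map u μ = volume.restrict (Set.Ioc (0 : ℝ) 1))
    (hπunif : ∀ p0 : Equiv.Perm (Fin V),
      μ {ω | π ω = p0} = (Nat.factorial V : ℝ≥0∞)⁻¹)
    (hindep : ∀ (s : Set ℝ), MeasurableSet s → ∀ p0 : Equiv.Perm (Fin V),
      μ {ω | π ω = p0 ∧ u ω ∈ s} = μ {ω | π ω = p0} * μ {ω | u ω ∈ s}) :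
    ∀ (k r : Fin V),
      ∫ ω in {ω | GammaITS V μp (π ω) (u ω) = k ∧ π ω k = r}, u ω ∂μ
        = (1 / 2 + (1 - μp k) * ((r : ℝ) / (V - 1) - 1 / 2))
            * (μ {ω | GammaITS V μp (π ω) (u ω) = k ∧ π ω k = r}).toReal := by
  intro k r
  have hfib : ∑ p, μ {ω | π ω = p} ≤ μ Set.univ := by
    simp only [hπunif, Finset.sum_const, Finset.card_univ, Fintype.card_perm, Fintype.card_fin,
      nsmul_eq_mul, measure_univ]
    exact (ENNReal.mul_inv_cancel (by positivity) (by simp)).le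
  have hπ p : ∀ᵐ ω ∂μ.restrict {ω | π ω = p}, π ω = p :=
    ae_restrict_mem₀ (nullMeasurableSet_fiber_of_sum_le hfib p)
  have hlaw p : (μ.restrict {ω | π ω = p}).map u
      = (Nat.factorial V : ℝ≥0∞)⁻¹ • volume.restrict (Set.Ioc 0 1) := by
    rw [map_restrict_eq_smul_map_of_indep (S := {ω | π ω = p}) hu (hindep · · p), hπunif,
      hunif]
  have hint : Integrable u μ :=
    (integrable_map_measure aestronglyMeasurable_id hu.aemeasurable).mp
      (hunif ▸ continuous_id.integrableOn_Ioc)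
  rw [setIntegral_eq_sum_restrict_fiber hfib hint, measure_eq_sum_restrict_fiber hfib]
  simp only [setIntegral_itsEvent hu (hlaw _) hμp hsum k r (hπ _),
    measure_itsEvent hu (hlaw _) hμp hsum k r (hπ _)]
  rw [← Finset.mul_sum, ← Finset.mul_sum, ← Finset.sum_filter, ← Finset.sum_filter,
    Finset.sum_add_distrib, ← Finset.mul_sum, sum_rankMassBelow,
    Finset.sum_erase_eq_sub (Finset.mem_univ k), hsum, Finset.sum_const, Finset.sum_const,
    nsmul_eq_mul, nsmul_eq_mul, ENNReal.toReal_mul, ENNReal.toReal_mul, ENNReal.toReal_natCast,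
    ENNReal.toReal_ofReal (hμp k)]
  ring

/-- For the ITS output `Y` with uniformly random permutation `π` and independent
`u ~ Unif[0,1]`: `E[u | Y, π(Y)] = 1/2 + (1 - μ(Y))((π(Y)-1)/(V-1) - 1/2)`.
Here ranks in `{1,…,V}` are encoded by `Fin V`, so `(π(Y)-1)` is `(r : ℝ)` for `r : Fin V`. -/
theorem its_conditional_mean_u
    {Ω : Type*} [MeasurableSpace Ω] (μ : Measure Ω) [IsProbabilityMeasure μ]
    (V : ℕ) [NeZero V] (hV : 2 ≤ V)
    (μp : Fin V → ℝ) (hμp : ∀ k, 0 ≤ μp k) (hsum : ∑ k, μp k = 1)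
    (π : Ω → Equiv.Perm (Fin V)) (u : Ω → ℝ) (hu : Measurable u)
    (hunif : Measure.map u μ = volume.restrict (Set.Ioc (0 : ℝ) 1))
    (hπunif : ∀ p0 : Equiv.Perm (Fin V),
      μ {ω | π ω = p0} = (Nat.factorial V : ℝ≥0∞)⁻¹)
    (hindep : ∀ (s : Set ℝ), MeasurableSet s → ∀ p0 : Equiv.Perm (Fin V),
      μ {ω | π ω = p0 ∧ u ω ∈ s} = μ {ω | π ω = p0} * μ {ω | u ω ∈ s}) :
    ∀ (k r : Fin V),
      ∫ ω in {ω | GammaITS V μp (π ω) (u ω) = k ∧ π ω k = r}, u ω ∂μ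
        = (1 / 2 + (1 - μp k) * ((r : ℝ) / (V - 1) - 1 / 2))
            * (μ {ω | GammaITS V μp (π ω) (u ω) = k ∧ π ω k = r}).toReal :=
  its_conditional_mean_u_general μ V μp hμp hsum π u hu hunif hπunif hindep
end

section
/- With the ITS decoder where π is a uniformly random permutation of {1,...,V} and u ~ Unif[0,1] independent of π, and Y = Γ((π,u),μ), one has E[(u - 1/2)((π(Y)-1)/(V-1) - 1/2)] = E[(1 - μ(Y))·((π(Y)-1)/(V-1) - 1/2)²], and since conditional on Y the rank π(Y) is uniform on {1,...,V}, this equals C·E[1 - μ(Y)] where C = E[((R-1)/(V-1) - 1/2)²] for R uniform on {1,...,V}. In particular the expectation is nonnegative, and strictly positive unless μ is a point mass. -/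
open MeasureTheory ProbabilityTheory
open scoped ENNReal

section ITSAux

set_option linter.unusedSectionVars false
set_option linter.unusedVariables false

open Finset intervalIntegral

variable {V : ℕ} [NeZero V]

/-- rank-indexed probabilities -/
def qv (μp : Fin V → ℝ) (p : Equiv.Perm (Fin V)) (i : Fin V) : ℝ := μp (p.symm i)

noncomputable def Slo (μp : Fin V → ℝ) (p : Equiv.Perm (Fin V)) (r : Fin V) : ℝ :=
  ∑ i ∈ Finset.Iio r, qv μp p i

noncomputable def Shi (μp : Fin V → ℝ) (p : Equiv.Perm (Fin V)) (r : Fin V) : ℝ :=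
  ∑ i ∈ Finset.Iic r, qv μp p i

noncomputable def mrk (μp : Fin V → ℝ) (p : Equiv.Perm (Fin V)) (x : ℝ) : Fin V :=
  (Finset.univ.filter (fun r => x ≤ Shi μp p r)).min.untopD default

noncomputable def nicef (μp : Fin V → ℝ) (p : Equiv.Perm (Fin V))
    (base : ℝ → ℝ) (c : Fin V → ℝ) (x : ℝ) : ℝ :=
  ∑ r, (Set.Ioc (Slo μp p r) (Shi μp p r)).indicator (fun y => base y * c r) x

variable {μp : Fin V → ℝ} (p : Equiv.Perm (Fin V))

lemma qv_sum : ∑ i, qv μp p i = ∑ k, μp k := Equiv.sum_comp p.symm μp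

lemma Shi_top (hsum : ∑ k, μp k = 1) :
    Shi μp p ⟨V-1, by have := NeZero.pos V; omega⟩ = 1 := by
  rw [Shi, ← hsum, ← qv_sum p]
  apply Finset.sum_congr _ (fun _ _ => rfl)
  apply Finset.eq_univ_iff_forall.mpr
  intro i
  rw [Finset.mem_Iic, Fin.le_def]
  have := i.isLt; simp; omega

lemma Shi_le_one (hμp : ∀ k, 0 ≤ μp k) (hsum : ∑ k, μp k = 1) (r : Fin V) :
    Shi μp p r ≤ 1 := by
  rw [← hsum, ← qv_sum p]
  exact Finset.sum_le_sum_of_subset_of_nonneg (Finset.subset_univ _) (fun i _ _ => hμp _)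

lemma Shi_le_Slo (hμp : ∀ k, 0 ≤ μp k) {r r' : Fin V} (h : r < r') :
    Shi μp p r ≤ Slo μp p r' :=
  Finset.sum_le_sum_of_subset_of_nonneg
    (fun i hi => by rw [Finset.mem_Iic] at hi; rw [Finset.mem_Iio]; exact lt_of_le_of_lt hi h)
    (fun i _ _ => hμp _)

lemma Slo_nonneg (hμp : ∀ k, 0 ≤ μp k) (r : Fin V) : 0 ≤ Slo μp p r :=
  Finset.sum_nonneg fun i _ => hμp _

lemma Shi_eq_Slo_add (r : Fin V) : Shi μp p r = Slo μp p r + qv μp p r := by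
  rw [Shi, Slo, ← Finset.Iio_insert, Finset.sum_insert (by simp), add_comm]

lemma mrk_eq_iff (hμp : ∀ k, 0 ≤ μp k) (hsum : ∑ k, μp k = 1) {x : ℝ}
    (hx : x ∈ Set.Ioc (0:ℝ) 1) (r : Fin V) :
    mrk μp p x = r ↔ x ∈ Set.Ioc (Slo μp p r) (Shi μp p r) := by
  set F := Finset.univ.filter (fun r => x ≤ Shi μp p r) with hF
  have htop : (⟨V-1, by have := NeZero.pos V; omega⟩ : Fin V) ∈ F := by
    rw [hF, Finset.mem_filter]
    exact ⟨Finset.mem_univ _, by rw [Shi_top p hsum]; exact hx.2⟩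
  have hne : F.Nonempty := ⟨_, htop⟩
  constructor
  · rintro rfl
    obtain ⟨m₀, hm₀⟩ := Finset.min_of_nonempty hne
    have hmem : m₀ ∈ F := Finset.mem_of_min hm₀
    have huntop : mrk μp p x = m₀ := by rw [mrk, ← hF, hm₀]; rfl
    rw [huntop]
    rw [hF, Finset.mem_filter] at hmem
    refine ⟨?_, hmem.2⟩
    by_contra hle
    push_neg at hle
    have hpos : (0:ℝ) < Slo μp p m₀ := lt_of_lt_of_le hx.1 hle
    have hne2 : (Finset.Iio m₀).Nonempty := by
      by_contra hempty
      rw [Finset.not_nonempty_iff_eq_empty] at hempty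
      rw [Slo, hempty, Finset.sum_empty] at hpos
      exact lt_irrefl _ hpos
    obtain ⟨r', hr'mem, hr'max⟩ := Finset.exists_max_image (Finset.Iio m₀) id hne2
    rw [Finset.mem_Iio] at hr'mem
    have hIic : Finset.Iic r' = Finset.Iio m₀ := by
      ext i
      rw [Finset.mem_Iic, Finset.mem_Iio]
      constructor
      · intro h; exact lt_of_le_of_lt h hr'mem
      · intro h; exact hr'max i (Finset.mem_Iio.mpr h)
    have : x ≤ Shi μp p r' := le_trans hle (le_of_eq (by rw [Shi, hIic, Slo]))
    have hr'F : r' ∈ F := by rw [hF, Finset.mem_filter]; exact ⟨Finset.mem_univ _, this⟩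
    exact absurd (Finset.min_le_of_eq hr'F hm₀) (not_le.mpr hr'mem)
  · rintro ⟨h1, h2⟩
    have hrF : r ∈ F := by rw [hF, Finset.mem_filter]; exact ⟨Finset.mem_univ _, h2⟩
    have hmin : F.min = (r : WithTop (Fin V)) := by
      apply le_antisymm (Finset.min_le hrF)
      apply Finset.le_min
      intro b hb
      rw [hF, Finset.mem_filter] at hb
      by_contra hlt
      push_neg at hlt
      have hblt : b < r := by exact_mod_cast WithTop.coe_lt_coe.mp (by exact_mod_cast hlt)
      exact absurd (le_trans hb.2 (Shi_le_Slo p hμp hblt)) (not_le.mpr h1)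
    rw [mrk, ← hF, hmin]
    rfl

lemma Sfilter_eq (r : Fin V) :
    (∑ j ∈ Finset.univ.filter (fun j => p j ≤ r), μp j) = Shi μp p r := by
  rw [Shi]
  refine Finset.sum_equiv p ?_ ?_ <;> intro i <;> simp [qv]

lemma gamma_eq (x : ℝ) : GammaITS V μp p x = p.symm (mrk μp p x) := by
  rw [GammaITS, mrk]
  simp only [Sfilter_eq]

-- interval integral evaluations

lemma eval_const (a b c : ℝ) (hab : a ≤ b) :
    ∫ x in Set.Ioc a b, c = (b - a) * c := by
  rw [setIntegral_const, measureReal_def, Real.volume_Ioc, ENNReal.toReal_ofReal (by linarith), smul_eq_mul]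

lemma eval_lin (a b c : ℝ) (hab : a ≤ b) :
    ∫ x in Set.Ioc a b, (x - 1/2) * c = (b - a) * ((a + b)/2 - 1/2) * c := by
  rw [← intervalIntegral.integral_of_le hab]
  have h1 : ∫ x in a..b, (x - 1/2) * c = (∫ x in a..b, x - 1/2) * c :=
    intervalIntegral.integral_mul_const _ _
  rw [h1]
  have h2 : ∫ x in a..b, (x - 1/2) = (∫ x in a..b, x) - ∫ x in a..b, (1/2:ℝ) :=
    intervalIntegral.integral_sub (intervalIntegrable_id) (intervalIntegrable_const)
  rw [h2, integral_id, intervalIntegral.integral_const]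
  rw [smul_eq_mul]; ring

-- nicef lemmas

lemma Ioc_subset (hμp : ∀ k, 0 ≤ μp k) (hsum : ∑ k, μp k = 1) (r : Fin V) :
    Set.Ioc (Slo μp p r) (Shi μp p r) ⊆ Set.Ioc (0:ℝ) 1 := fun x hx =>
  ⟨lt_of_le_of_lt (Slo_nonneg p hμp r) hx.1, le_trans hx.2 (Shi_le_one p hμp hsum r)⟩

lemma nicef_eq (hμp : ∀ k, 0 ≤ μp k) (hsum : ∑ k, μp k = 1) {base : ℝ → ℝ} {c : Fin V → ℝ}
    {x : ℝ} (hx : x ∈ Set.Ioc (0:ℝ) 1) :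
    nicef μp p base c x = base x * c (mrk μp p x) := by
  rw [nicef]
  rw [Finset.sum_eq_single (mrk μp p x)]
  · rw [Set.indicator_of_mem ((mrk_eq_iff p hμp hsum hx _).mp rfl)]
  · intro r _ hr
    apply Set.indicator_of_notMem
    intro hmem
    exact hr ((mrk_eq_iff p hμp hsum hx r).mpr hmem).symm
  · simp

lemma nicef_measurable (base : ℝ → ℝ) (hbase : Continuous base) (c : Fin V → ℝ) :
    Measurable (nicef μp p base c) := by
  apply Finset.measurable_sum
  intro r _
  exact ((hbase.mul continuous_const).measurable).indicator measurableSet_Ioc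

lemma nicef_bound (hμp : ∀ k, 0 ≤ μp k) (hsum : ∑ k, μp k = 1)
    {base : ℝ → ℝ} {B₀ : ℝ} (hB₀ : ∀ y ∈ Set.Ioc (0:ℝ) 1, |base y| ≤ B₀)
    (hB₀' : 0 ≤ B₀) (c : Fin V → ℝ) (x : ℝ) :
    |nicef μp p base c x| ≤ ∑ r, B₀ * |c r| := by
  refine le_trans (Finset.abs_sum_le_sum_abs _ _) (Finset.sum_le_sum fun r _ => ?_)
  by_cases hmem : x ∈ Set.Ioc (Slo μp p r) (Shi μp p r)
  · rw [Set.indicator_of_mem hmem, abs_mul]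
    exact mul_le_mul_of_nonneg_right (hB₀ x (Ioc_subset p hμp hsum r hmem)) (abs_nonneg _)
  · rw [Set.indicator_of_notMem hmem, abs_zero]
    positivity

lemma nicef_integral (hμp : ∀ k, 0 ≤ μp k) (hsum : ∑ k, μp k = 1)
    {base : ℝ → ℝ} (hbase : Continuous base) (c : Fin V → ℝ) :
    ∫ x in Set.Ioc (0:ℝ) 1, nicef μp p base c x
      = ∑ r, ∫ x in Set.Ioc (Slo μp p r) (Shi μp p r), base x * c r := by
  unfold nicef
  rw [MeasureTheory.integral_finset_sum]
  · refine Finset.sum_congr rfl fun r _ => ?_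
    rw [MeasureTheory.integral_indicator measurableSet_Ioc,
      Measure.restrict_restrict measurableSet_Ioc,
      Set.inter_eq_left.mpr (Ioc_subset p hμp hsum r)]
  · intro r _
    exact ((hbase.mul continuous_const).integrableOn_Ioc).integrable.indicator measurableSet_Ioc

-- permutation sum lemmas

lemma sum_perm_inv (f : Fin V → ℝ) (r r' : Fin V) :
    ∑ p : Equiv.Perm (Fin V), f (p r) = ∑ p : Equiv.Perm (Fin V), f (p r') := by
  refine Fintype.sum_equiv (Equiv.mulRight (Equiv.swap r r')) _ _ fun p => ?_
  simp [Equiv.Perm.mul_apply]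

lemma sum_perm_single (f : Fin V → ℝ) (r : Fin V) :
    (V:ℝ) * ∑ p : Equiv.Perm (Fin V), f (p r) = (Nat.factorial V : ℝ) * ∑ k, f k := by
  have h1 : ∑ r' : Fin V, ∑ p : Equiv.Perm (Fin V), f (p r')
      = (V:ℝ) * ∑ p : Equiv.Perm (Fin V), f (p r) := by
    rw [Finset.sum_congr rfl (fun r' _ => sum_perm_inv f r' r), Finset.sum_const]
    simp [mul_comm]
  rw [← h1, Finset.sum_comm]
  have h2 : ∀ p : Equiv.Perm (Fin V), ∑ r' : Fin V, f (p r') = ∑ k, f k :=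
    fun p => Equiv.sum_comp p f
  rw [Finset.sum_congr rfl (fun p _ => h2 p), Finset.sum_const]
  simp [Fintype.card_perm, mul_comm]

lemma exists_pair_perm {i j i' j' : Fin V} (hij : i ≠ j) (hij' : i' ≠ j') :
    ∃ c : Equiv.Perm (Fin V), c i = i' ∧ c j = j' := by
  refine ⟨(Equiv.swap (Equiv.swap i i' j) j') * Equiv.swap i i', ?_, ?_⟩
  · have h1 : Equiv.swap i i' j ≠ i' := by
      intro h
      rcases eq_or_ne j i' with rfl | hji'
      · rw [Equiv.swap_apply_right] at h
        exact hij h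
      · rw [Equiv.swap_apply_of_ne_of_ne hij.symm hji'] at h
        exact hji' h
    simp only [Equiv.Perm.mul_apply, Equiv.swap_apply_left]
    exact Equiv.swap_apply_of_ne_of_ne (Ne.symm h1) hij'
  · simp only [Equiv.Perm.mul_apply]
    exact Equiv.swap_apply_left _ _

lemma sum_perm_pair_inv (g : Fin V → Fin V → ℝ) {i j i' j' : Fin V}
    (hij : i ≠ j) (hij' : i' ≠ j') :
    ∑ p : Equiv.Perm (Fin V), g (p i) (p j) = ∑ p : Equiv.Perm (Fin V), g (p i') (p j') := by
  obtain ⟨c, hci, hcj⟩ := exists_pair_perm hij' hij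
  refine Fintype.sum_equiv (Equiv.mulRight c) _ _ fun p => ?_
  simp [Equiv.Perm.mul_apply, hci, hcj]

lemma sum_perm_pair (g : Fin V → Fin V → ℝ) {i j : Fin V} (hij : i ≠ j) :
    ((V:ℝ) * (V-1)) * ∑ p : Equiv.Perm (Fin V), g (p i) (p j)
      = (Nat.factorial V : ℝ) * ∑ k, ∑ l ∈ Finset.univ.erase k, g k l := by
  have h1 : ∑ i' : Fin V, ∑ j' ∈ Finset.univ.erase i', ∑ p : Equiv.Perm (Fin V), g (p i') (p j')
      = ((V:ℝ) * (V-1)) * ∑ p : Equiv.Perm (Fin V), g (p i) (p j) := by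
    rw [Finset.sum_congr rfl (fun i' _ => Finset.sum_congr rfl
      (fun j' hj' => sum_perm_pair_inv g (Finset.ne_of_mem_erase hj').symm hij))]
    rw [Finset.sum_congr rfl (fun i' _ => by
      rw [Finset.sum_const, Finset.card_erase_of_mem (Finset.mem_univ _), Finset.card_univ,
        Fintype.card_fin])]
    rw [Finset.sum_const, Finset.card_univ, Fintype.card_fin]
    have hV : 1 ≤ V := NeZero.pos V
    simp only [nsmul_eq_mul]
    rw [Nat.cast_sub hV, Nat.cast_one]
    ring
  rw [← h1]
  have h2 : ∀ p : Equiv.Perm (Fin V),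
      ∑ i' : Fin V, ∑ j' ∈ Finset.univ.erase i', g (p i') (p j')
        = ∑ k, ∑ l ∈ Finset.univ.erase k, g k l := by
    intro p
    have hin : ∀ i' : Fin V, ∑ j' ∈ Finset.univ.erase i', g (p i') (p j')
        = ∑ l ∈ Finset.univ.erase (p i'), g (p i') l := by
      intro i'
      refine Finset.sum_equiv p ?_ ?_ <;> intro a <;>
        simp [Finset.mem_erase, EmbeddingLike.apply_eq_iff_eq]
    rw [Finset.sum_congr rfl (fun i' _ => hin i')]
    exact Equiv.sum_comp p (fun k => ∑ l ∈ Finset.univ.erase k, g k l)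
  calc ∑ i' : Fin V, ∑ j' ∈ Finset.univ.erase i', ∑ p : Equiv.Perm (Fin V), g (p i') (p j')
      = ∑ i' : Fin V, ∑ p : Equiv.Perm (Fin V), ∑ j' ∈ Finset.univ.erase i', g (p i') (p j') :=
        Finset.sum_congr rfl fun i' _ => Finset.sum_comm
    _ = ∑ p : Equiv.Perm (Fin V), ∑ i' : Fin V, ∑ j' ∈ Finset.univ.erase i', g (p i') (p j') :=
        Finset.sum_comm
    _ = ∑ p : Equiv.Perm (Fin V), ∑ k, ∑ l ∈ Finset.univ.erase k, g k l :=
        Finset.sum_congr rfl fun p _ => h2 p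
    _ = (Nat.factorial V : ℝ) * ∑ k, ∑ l ∈ Finset.univ.erase k, g k l := by
        rw [Finset.sum_const]; simp [Fintype.card_perm, mul_comm]

lemma sum_symm_eq (F : Equiv.Perm (Fin V) → ℝ) :
    ∑ p : Equiv.Perm (Fin V), F p.symm = ∑ p : Equiv.Perm (Fin V), F p := by
  refine Fintype.sum_equiv (Equiv.inv (Equiv.Perm (Fin V))) _ _ fun p => ?_
  rfl

lemma sum_perm_symm_single (f : Fin V → ℝ) (r : Fin V) :
    ∑ p : Equiv.Perm (Fin V), f (p.symm r) = ((V.factorial:ℝ) * ∑ k, f k) / V := by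
  have h1 : ∑ p : Equiv.Perm (Fin V), f (p.symm r) = ∑ p : Equiv.Perm (Fin V), f (p r) :=
    sum_symm_eq (fun p => f (p r))
  have hV : (V:ℝ) ≠ 0 := Nat.cast_ne_zero.mpr (NeZero.ne V)
  rw [h1, eq_div_iff hV, mul_comm _ ((V:ℝ)), sum_perm_single f r]

lemma sum_perm_symm_pair (hV2 : 2 ≤ V) (g : Fin V → Fin V → ℝ) {i j : Fin V} (hij : i ≠ j) :
    ∑ p : Equiv.Perm (Fin V), g (p.symm i) (p.symm j)
      = ((V.factorial:ℝ) * ∑ k, ∑ l ∈ Finset.univ.erase k, g k l) / ((V:ℝ) * (V-1)) := by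
  have h1 : ∑ p : Equiv.Perm (Fin V), g (p.symm i) (p.symm j)
      = ∑ p : Equiv.Perm (Fin V), g (p i) (p j) := sum_symm_eq (fun p => g (p i) (p j))
  have hV : (V:ℝ) ≠ 0 := Nat.cast_ne_zero.mpr (NeZero.ne V)
  have hV1 : (V:ℝ) - 1 ≠ 0 := by
    have : (2:ℝ) ≤ (V:ℝ) := by exact_mod_cast hV2
    linarith
  rw [h1, eq_div_iff (mul_ne_zero hV hV1), mul_comm _ ((V:ℝ) * ((V:ℝ)-1)), sum_perm_pair g hij]

set_option maxHeartbeats 1000000 in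
theorem master
    {Ω : Type*} [MeasurableSpace Ω] (μ : Measure Ω) [IsProbabilityMeasure μ]
    {μp : Fin V → ℝ} (hμp : ∀ k, 0 ≤ μp k) (hsum : ∑ k, μp k = 1)
    (π : Ω → Equiv.Perm (Fin V)) (u : Ω → ℝ) (hu : Measurable u)
    (hunif : Measure.map u μ = volume.restrict (Set.Ioc (0 : ℝ) 1))
    (hπunif : ∀ p0 : Equiv.Perm (Fin V),
      μ {ω | π ω = p0} = (Nat.factorial V : ℝ≥0∞)⁻¹)
    (hindep : ∀ (s : Set ℝ), MeasurableSet s → ∀ p0 : Equiv.Perm (Fin V),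
      μ {ω | π ω = p0 ∧ u ω ∈ s} = μ {ω | π ω = p0} * μ {ω | u ω ∈ s})
    (base : ℝ → ℝ) (hbase : Continuous base)
    {B₀ : ℝ} (hB₀ : ∀ y ∈ Set.Ioc (0:ℝ) 1, |base y| ≤ B₀) (hB₀' : 0 ≤ B₀)
    (c : Equiv.Perm (Fin V) → Fin V → ℝ) :
    ∫ ω, base (u ω) * c (π ω) (mrk μp (π ω) (u ω)) ∂μ
      = (Nat.factorial V : ℝ)⁻¹ * ∑ p : Equiv.Perm (Fin V),
          ∑ r, ∫ x in Set.Ioc (Slo μp p r) (Shi μp p r), base x * c p r := by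
  set N := Nat.factorial V with hN
  have hN0 : N ≠ 0 := Nat.factorial_ne_zero V
  set A : Equiv.Perm (Fin V) → Set Ω := fun p => {ω | π ω = p} with hA
  set T : Equiv.Perm (Fin V) → Set Ω := fun p => toMeasurable μ (A p) with hT
  have hTm : ∀ p, MeasurableSet (T p) := fun p => measurableSet_toMeasurable μ _
  have hAT : ∀ p, A p ⊆ T p := fun p => subset_toMeasurable μ _
  have hμT : ∀ p, μ (T p) = (N : ℝ≥0∞)⁻¹ := fun p => by
    rw [hT]; rw [measure_toMeasurable]; exact hπunif p
  set B : Equiv.Perm (Fin V) → Set Ω :=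
    fun p => (⋃ q ∈ Finset.univ.erase p, T q)ᶜ with hB
  have hBm : ∀ p, MeasurableSet (B p) := fun p =>
    (MeasurableSet.biUnion (Finset.countable_toSet _) (fun q _ => hTm q)).compl
  have hBA : ∀ p, B p ⊆ A p := by
    intro p ω hω
    by_contra hne
    exact hω (Set.mem_biUnion
      (Finset.mem_erase.mpr ⟨fun h => hne (by rw [hA]; exact h), Finset.mem_univ _⟩)
      (hAT (π ω) rfl))
  have hBT : ∀ p, B p ⊆ T p := fun p => (hBA p).trans (hAT p)
  -- lower bound on μ (B p)
  have hμB : ∀ p, μ (B p) = (N : ℝ≥0∞)⁻¹ := by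
    intro p
    refine le_antisymm (le_trans (measure_mono (hBT p)) (le_of_eq (hμT p))) ?_
    have hcard : (Finset.univ.erase p).card = N - 1 := by
      rw [Finset.card_erase_of_mem (Finset.mem_univ _), Finset.card_univ, Fintype.card_perm,
        Fintype.card_fin]
    have hU : μ (⋃ q ∈ Finset.univ.erase p, T q) ≤ (N - 1 : ℕ) • (N : ℝ≥0∞)⁻¹ := by
      refine le_trans (measure_biUnion_finset_le _ _) ?_
      rw [Finset.sum_congr rfl (fun q _ => hμT q), Finset.sum_const, hcard]
    have h1 : (1 : ℝ≥0∞) ≤ μ (B p) + (N - 1 : ℕ) • (N : ℝ≥0∞)⁻¹ := by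
      calc (1 : ℝ≥0∞) = μ (Set.univ : Set Ω) := (measure_univ).symm
        _ ≤ μ (B p ∪ ⋃ q ∈ Finset.univ.erase p, T q) := by
            refine measure_mono ?_
            intro ω _
            by_cases h : ω ∈ ⋃ q ∈ Finset.univ.erase p, T q
            · exact Set.mem_union_right _ h
            · exact Set.mem_union_left _ h
        _ ≤ μ (B p) + μ (⋃ q ∈ Finset.univ.erase p, T q) := measure_union_le _ _
        _ ≤ _ := add_le_add le_rfl hU
    have hNc : ((N : ℝ≥0∞)) ≠ 0 := Nat.cast_ne_zero.mpr hN0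
    have hcast : (1:ℝ≥0∞) + ((N-1:ℕ):ℝ≥0∞) = (N:ℝ≥0∞) := by
      rw [← Nat.cast_one, ← Nat.cast_add]
      exact congrArg _ (by omega)
    have hsum1 : ((N : ℝ≥0∞)⁻¹) + (N - 1 : ℕ) • (N : ℝ≥0∞)⁻¹ = 1 := by
      rw [nsmul_eq_mul]
      calc (N:ℝ≥0∞)⁻¹ + ((N-1:ℕ):ℝ≥0∞) * (N:ℝ≥0∞)⁻¹
          = ((1:ℝ≥0∞) + ((N-1:ℕ):ℝ≥0∞)) * (N:ℝ≥0∞)⁻¹ := by ring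
        _ = (N:ℝ≥0∞) * (N:ℝ≥0∞)⁻¹ := by rw [hcast]
        _ = 1 := ENNReal.mul_inv_cancel hNc (ENNReal.natCast_ne_top _)
    have hfin : ((N - 1 : ℕ) • (N : ℝ≥0∞)⁻¹) ≠ ⊤ := by
      rw [nsmul_eq_mul]
      exact ENNReal.mul_ne_top (ENNReal.natCast_ne_top _) (ENNReal.inv_ne_top.mpr hNc)
    rw [← hsum1] at h1
    exact (ENNReal.add_le_add_iff_right hfin).mp h1
  have hTB0 : ∀ p, μ (T p \ B p) = 0 := by
    intro p
    rw [measure_diff (hBT p) (hBm p).nullMeasurableSet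
      (by rw [hμB]; exact ENNReal.inv_ne_top.mpr (Nat.cast_ne_zero.mpr hN0))]
    rw [hμT, hμB, tsub_self]
  -- the pushforward identity
  have hmap : ∀ p, Measure.map u (μ.restrict (B p))
      = (N : ℝ≥0∞)⁻¹ • (volume.restrict (Set.Ioc (0:ℝ) 1)) := by
    intro p
    ext s hs
    rw [Measure.map_apply hu hs, Measure.restrict_apply (hu hs)]
    have key : μ (u ⁻¹' s ∩ B p) = μ (A p ∩ u ⁻¹' s) := by
      refine le_antisymm (measure_mono fun ω hω => ⟨hBA p hω.2, hω.1⟩) ?_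
      calc μ (A p ∩ u ⁻¹' s) ≤ μ ((u ⁻¹' s ∩ B p) ∪ (T p \ B p)) := by
            refine measure_mono fun ω hω => ?_
            by_cases h : ω ∈ B p
            · exact Set.mem_union_left _ ⟨hω.2, h⟩
            · exact Set.mem_union_right _ ⟨hAT p hω.1, h⟩
        _ ≤ μ (u ⁻¹' s ∩ B p) + μ (T p \ B p) := measure_union_le _ _
        _ = μ (u ⁻¹' s ∩ B p) := by rw [hTB0, add_zero]
    rw [key]
    have hset : A p ∩ u ⁻¹' s = {ω | π ω = p ∧ u ω ∈ s} := by
      ext ω; exact Iff.rfl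
    rw [hset, hindep s hs p, hπunif p]
    have hus : μ {ω | u ω ∈ s} = volume (s ∩ Set.Ioc (0:ℝ) 1) := by
      have : {ω | u ω ∈ s} = u ⁻¹' s := rfl
      rw [this, ← Measure.map_apply hu hs, hunif, Measure.restrict_apply hs]
    rw [hus, Measure.smul_apply, Measure.restrict_apply hs, smul_eq_mul]
  -- a.e. facts
  have haeIoc : ∀ᵐ ω ∂μ, u ω ∈ Set.Ioc (0:ℝ) 1 := by
    have : μ (u ⁻¹' (Set.Ioc (0:ℝ) 1)ᶜ) = 0 := by
      rw [← Measure.map_apply hu measurableSet_Ioc.compl, hunif,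
        Measure.restrict_apply measurableSet_Ioc.compl]
      simp
    exact this
  have haeB : ∀ᵐ ω ∂μ, ω ∈ ⋃ p : Equiv.Perm (Fin V), B p := by
    have hdisj : Pairwise (Function.onFun Disjoint B) := by
      intro p q hpq
      refine Set.disjoint_left.mpr fun ω hp hq => hpq ?_
      have h1 := hBA p hp
      have h2 := hBA q hq
      rw [hA] at h1 h2
      exact h1.symm.trans h2
    have hμU : μ (⋃ p : Equiv.Perm (Fin V), B p) = 1 := by
      rw [measure_iUnion hdisj (fun p => hBm p)]
      rw [tsum_fintype, Finset.sum_congr rfl (fun p _ => hμB p), Finset.sum_const,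
        Finset.card_univ, Fintype.card_perm, Fintype.card_fin, nsmul_eq_mul]
      exact ENNReal.mul_inv_cancel (Nat.cast_ne_zero.mpr hN0) (ENNReal.natCast_ne_top _)
    have : μ (⋃ p : Equiv.Perm (Fin V), B p)ᶜ = 0 := by
      rw [measure_compl (MeasurableSet.iUnion fun p => hBm p) (by simp), hμU, measure_univ,
        tsub_self]
    exact this
  -- the nice version
  set H : Ω → ℝ := fun ω => ∑ p : Equiv.Perm (Fin V),
    (B p).indicator (fun ω' => nicef μp p base (c p) (u ω')) ω with hH
  have hint : ∀ p : Equiv.Perm (Fin V),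
      Integrable (fun ω => nicef μp p base (c p) (u ω)) μ := by
    intro p
    refine Integrable.mono' (integrable_const (∑ r, B₀ * |c p r|))
      ((nicef_measurable p base hbase (c p)).comp hu).aestronglyMeasurable ?_
    exact Filter.Eventually.of_forall fun ω => nicef_bound p hμp hsum hB₀ hB₀' (c p) (u ω)
  have haeeq : (fun ω => base (u ω) * c (π ω) (mrk μp (π ω) (u ω))) =ᵐ[μ] H := by
    filter_upwards [haeIoc, haeB] with ω hω1 hω2
    obtain ⟨p₀, hp₀⟩ : ∃ p₀, ω ∈ B p₀ := by
      simpa using hω2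
    have hπω : π ω = p₀ := hBA p₀ hp₀
    show base (u ω) * c (π ω) (mrk μp (π ω) (u ω)) = ∑ p : Equiv.Perm (Fin V),
      (B p).indicator (fun ω' => nicef μp p base (c p) (u ω')) ω
    rw [Finset.sum_eq_single p₀]
    · rw [Set.indicator_of_mem hp₀, nicef_eq p₀ hμp hsum hω1, hπω]
    · intro q _ hq
      refine Set.indicator_of_notMem (fun hmem => hq ?_) _
      have h2 : π ω = q := hBA q hmem
      exact h2.symm.trans hπω
    · simp
  rw [integral_congr_ae haeeq, hH]
  rw [MeasureTheory.integral_finset_sum _ (fun p _ => (hint p).indicator (hBm p))]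
  have hstep : ∀ p : Equiv.Perm (Fin V),
      ∫ ω, (B p).indicator (fun ω' => nicef μp p base (c p) (u ω')) ω ∂μ
        = (N : ℝ)⁻¹ * ∑ r, ∫ x in Set.Ioc (Slo μp p r) (Shi μp p r), base x * c p r := by
    intro p
    rw [MeasureTheory.integral_indicator (hBm p)]
    rw [← MeasureTheory.integral_map hu.aemeasurable
      (nicef_measurable p base hbase (c p)).aestronglyMeasurable]
    rw [hmap p, MeasureTheory.integral_smul_measure]
    rw [nicef_integral p hμp hsum hbase (c p)]
    rw [ENNReal.toReal_inv, ENNReal.toReal_natCast, smul_eq_mul]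
  rw [Finset.sum_congr rfl (fun p _ => hstep p), ← Finset.mul_sum]

section alg2
lemma offdiag_sum (hsum : ∑ k, μp k = 1) :
    ∑ k, ∑ l ∈ Finset.univ.erase k, μp k * μp l = 1 - ∑ k, μp k^2 := by
  have h1 : ∀ k, ∑ l ∈ Finset.univ.erase k, μp k * μp l = μp k - μp k^2 := fun k => by
    rw [← Finset.mul_sum, Finset.sum_erase_eq_sub (Finset.mem_univ k), hsum]
    ring
  rw [Finset.sum_congr rfl (fun k _ => h1 k), Finset.sum_sub_distrib, hsum]

lemma sq_sum_eq (hsum : ∑ k, μp k = 1) :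
    ∑ k, μp k * (μp k / 2 - 1/2) = (∑ k, μp k^2)/2 - 1/2 := by
  have h1 : ∀ k, μp k * (μp k/2 - 1/2) = μp k^2/2 - μp k/2 := fun k => by ring
  rw [Finset.sum_congr rfl (fun k _ => h1 k), Finset.sum_sub_distrib,
    ← Finset.sum_div, ← Finset.sum_div, hsum]

lemma claim1 (hV2 : 2 ≤ V) (hsum : ∑ k, μp k = 1) :
    ∑ p : Equiv.Perm (Fin V), ∑ r : Fin V,
        qv μp p r * (Slo μp p r + qv μp p r/2 - 1/2) * (((r:ℕ):ℝ)/((V:ℝ)-1) - 1/2)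
      = (1 - ∑ k, μp k^2) * ((V.factorial:ℝ)/V)
          * ∑ r : Fin V, (((r:ℕ):ℝ)/((V:ℝ)-1) - 1/2)^2 := by
  have hVr : (V:ℝ) ≠ 0 := Nat.cast_ne_zero.mpr (NeZero.ne V)
  have hV1 : (V:ℝ) - 1 ≠ 0 := by
    have : (2:ℝ) ≤ (V:ℝ) := by exact_mod_cast hV2
    linarith
  rw [Finset.sum_comm]
  set T := ∑ k, μp k^2 with hT
  set N := (V.factorial : ℝ) with hN
  have hper : ∀ r : Fin V, ∑ p : Equiv.Perm (Fin V),
      qv μp p r * (Slo μp p r + qv μp p r/2 - 1/2) * (((r:ℕ):ℝ)/((V:ℝ)-1) - 1/2)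
      = (1 - T) * (N/V) * (((r:ℕ):ℝ)/((V:ℝ)-1) - 1/2)^2 := by
    intro r
    have hsplit : ∀ p : Equiv.Perm (Fin V),
        qv μp p r * (Slo μp p r + qv μp p r/2 - 1/2) * (((r:ℕ):ℝ)/((V:ℝ)-1) - 1/2)
        = qv μp p r * Slo μp p r * (((r:ℕ):ℝ)/((V:ℝ)-1) - 1/2)
          + qv μp p r * (qv μp p r/2 - 1/2) * (((r:ℕ):ℝ)/((V:ℝ)-1) - 1/2) := fun p => by ring
    rw [Finset.sum_congr rfl (fun p _ => hsplit p), Finset.sum_add_distrib,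
      ← Finset.sum_mul, ← Finset.sum_mul]
    have hA : ∑ p : Equiv.Perm (Fin V), qv μp p r * Slo μp p r
        = (r:ℕ) * ((N * (1-T))/((V:ℝ)*((V:ℝ)-1))) := by
      have h1 : ∀ p : Equiv.Perm (Fin V), qv μp p r * Slo μp p r
          = ∑ i ∈ Finset.Iio r, qv μp p r * qv μp p i := fun p => by
        rw [Slo, Finset.mul_sum]
      rw [Finset.sum_congr rfl (fun p _ => h1 p), Finset.sum_comm]
      have h2 : ∀ i ∈ Finset.Iio r, ∑ p : Equiv.Perm (Fin V), qv μp p r * qv μp p i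
          = (N * (1-T))/((V:ℝ)*((V:ℝ)-1)) := by
        intro i hi
        have hne : r ≠ i := (Finset.mem_Iio.mp hi).ne'
        have h3 := sum_perm_symm_pair hV2 (fun k l => μp k * μp l) hne
        rw [offdiag_sum hsum] at h3
        exact h3
      rw [Finset.sum_congr rfl h2, Finset.sum_const, nsmul_eq_mul]
      congr 1
      simp
    have hB : ∑ p : Equiv.Perm (Fin V), qv μp p r * (qv μp p r/2 - 1/2)
        = (N * (T/2 - 1/2))/V := by
      have h3 := sum_perm_symm_single (fun k => μp k * (μp k/2 - 1/2)) r
      rw [sq_sum_eq hsum] at h3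
      exact h3
    rw [hA, hB]
    field_simp
    ring
  rw [Finset.sum_congr rfl (fun r _ => hper r), ← Finset.mul_sum]

lemma claim2 (hsum : ∑ k, μp k = 1) :
    ∑ p : Equiv.Perm (Fin V), ∑ r : Fin V,
        qv μp p r * ((1 - qv μp p r) * (((r:ℕ):ℝ)/((V:ℝ)-1) - 1/2)^2)
      = (1 - ∑ k, μp k^2) * ((V.factorial:ℝ)/V)
          * ∑ r : Fin V, (((r:ℕ):ℝ)/((V:ℝ)-1) - 1/2)^2 := by
  rw [Finset.sum_comm]
  set T := ∑ k, μp k^2 with hT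
  set N := (V.factorial : ℝ) with hN
  have hone : ∑ k, μp k * (1 - μp k) = 1 - T := by
    have h1 : ∀ k, μp k * (1 - μp k) = μp k - μp k^2 := fun k => by ring
    rw [Finset.sum_congr rfl (fun k _ => h1 k), Finset.sum_sub_distrib, hsum]
  have hper : ∀ r : Fin V, ∑ p : Equiv.Perm (Fin V),
      qv μp p r * ((1 - qv μp p r) * (((r:ℕ):ℝ)/((V:ℝ)-1) - 1/2)^2)
      = (1 - T) * (N/V) * (((r:ℕ):ℝ)/((V:ℝ)-1) - 1/2)^2 := by
    intro r
    have h1 : ∀ p : Equiv.Perm (Fin V),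
        qv μp p r * ((1 - qv μp p r) * (((r:ℕ):ℝ)/((V:ℝ)-1) - 1/2)^2)
        = qv μp p r * (1 - qv μp p r) * (((r:ℕ):ℝ)/((V:ℝ)-1) - 1/2)^2 := fun p => by ring
    rw [Finset.sum_congr rfl (fun p _ => h1 p), ← Finset.sum_mul]
    have h3 := sum_perm_symm_single (fun k => μp k * (1 - μp k)) r
    rw [hone] at h3
    simp only [qv]
    rw [h3]
    ring
  rw [Finset.sum_congr rfl (fun r _ => hper r), ← Finset.mul_sum]

lemma claim3 (hsum : ∑ k, μp k = 1) :
    ∑ p : Equiv.Perm (Fin V), ∑ r : Fin V, qv μp p r * (1 - qv μp p r)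
      = (V.factorial:ℝ) * (1 - ∑ k, μp k^2) := by
  have hVr : (V:ℝ) ≠ 0 := Nat.cast_ne_zero.mpr (NeZero.ne V)
  rw [Finset.sum_comm]
  set T := ∑ k, μp k^2 with hT
  have hone : ∑ k, μp k * (1 - μp k) = 1 - T := by
    have h1 : ∀ k, μp k * (1 - μp k) = μp k - μp k^2 := fun k => by ring
    rw [Finset.sum_congr rfl (fun k _ => h1 k), Finset.sum_sub_distrib, hsum]
  have hper : ∀ r : Fin V, ∑ p : Equiv.Perm (Fin V), qv μp p r * (1 - qv μp p r)
      = ((V.factorial:ℝ) * (1 - T))/V := by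
    intro r
    have h3 := sum_perm_symm_single (fun k => μp k * (1 - μp k)) r
    rw [hone] at h3
    exact h3
  rw [Finset.sum_congr rfl (fun r _ => hper r), Finset.sum_const, Finset.card_univ,
    Fintype.card_fin, nsmul_eq_mul]
  field_simp

end alg2
end ITSAux

/-- Mean of the ITS detection statistic:
`E[(u - 1/2)((π(Y)-1)/(V-1) - 1/2)] = E[(1-μ(Y))((π(Y)-1)/(V-1) - 1/2)²] = C·E[1-μ(Y)]`
with `C = E[((R-1)/(V-1)-1/2)²]`, `R` uniform on `{1,…,V}`; it is nonnegative, and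
strictly positive unless `μp` is a point mass. Ranks `{1,…,V}` are encoded by `Fin V`. -/
theorem its_statistic_mean
    {Ω : Type*} [MeasurableSpace Ω] (μ : Measure Ω) [IsProbabilityMeasure μ]
    (V : ℕ) [NeZero V] (hV : 2 ≤ V)
    (μp : Fin V → ℝ) (hμp : ∀ k, 0 ≤ μp k) (hsum : ∑ k, μp k = 1)
    (π : Ω → Equiv.Perm (Fin V)) (u : Ω → ℝ) (hu : Measurable u)
    (hunif : Measure.map u μ = volume.restrict (Set.Ioc (0 : ℝ) 1))
    (hπunif : ∀ p0 : Equiv.Perm (Fin V),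
      μ {ω | π ω = p0} = (Nat.factorial V : ℝ≥0∞)⁻¹)
    (hindep : ∀ (s : Set ℝ), MeasurableSet s → ∀ p0 : Equiv.Perm (Fin V),
      μ {ω | π ω = p0 ∧ u ω ∈ s} = μ {ω | π ω = p0} * μ {ω | u ω ∈ s})
    (Y : Ω → Fin V) (hY : ∀ ω, Y ω = GammaITS V μp (π ω) (u ω))
    (C : ℝ) (hC : C = (1 / V : ℝ) * ∑ r : Fin V, ((r : ℝ) / (V - 1) - 1 / 2) ^ 2) :
    (∫ ω, (u ω - 1 / 2) * (((π ω (Y ω) : ℕ) : ℝ) / (V - 1) - 1 / 2) ∂μ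
        = ∫ ω, (1 - μp (Y ω)) * (((π ω (Y ω) : ℕ) : ℝ) / (V - 1) - 1 / 2) ^ 2 ∂μ) ∧
    (∫ ω, (u ω - 1 / 2) * (((π ω (Y ω) : ℕ) : ℝ) / (V - 1) - 1 / 2) ∂μ
        = C * ∫ ω, (1 - μp (Y ω)) ∂μ) ∧
    (0 ≤ ∫ ω, (u ω - 1 / 2) * (((π ω (Y ω) : ℕ) : ℝ) / (V - 1) - 1 / 2) ∂μ) ∧
    ((¬ ∃ k, μp k = 1) →
      0 < ∫ ω, (u ω - 1 / 2) * (((π ω (Y ω) : ℕ) : ℝ) / (V - 1) - 1 / 2) ∂μ) := by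
  have hVpos : (0:ℝ) < (V:ℝ) := by exact_mod_cast NeZero.pos V
  have hVr : (V:ℝ) ≠ 0 := ne_of_gt hVpos
  have hV1 : (V:ℝ) - 1 ≠ 0 := by
    have : (2:ℝ) ≤ (V:ℝ) := by exact_mod_cast hV
    linarith
  have hNpos : (0:ℝ) < (V.factorial : ℝ) := by exact_mod_cast V.factorial_pos
  have hNr : (V.factorial:ℝ) ≠ 0 := ne_of_gt hNpos
  set T := ∑ k, μp k^2 with hT
  set S2 := ∑ r : Fin V, (((r:ℕ):ℝ)/((V:ℝ)-1) - 1/2)^2 with hS2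
  have hbridge : ∀ ω, (π ω) (Y ω) = mrk μp (π ω) (u ω) := fun ω => by
    rw [hY ω, gamma_eq, Equiv.apply_symm_apply]
  have hμY : ∀ ω, μp (Y ω) = qv μp (π ω) (mrk μp (π ω) (u ω)) := fun ω => by
    rw [hY ω, gamma_eq]; rfl
  have hqnn : ∀ (p : Equiv.Perm (Fin V)) (r : Fin V), 0 ≤ qv μp p r := fun p r => hμp _
  have hab : ∀ (p : Equiv.Perm (Fin V)) (r : Fin V), Slo μp p r ≤ Shi μp p r := fun p r => by
    rw [Shi_eq_Slo_add]
    linarith [hqnn p r]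
  -- Integral 1
  have hE1 : ∫ ω, (u ω - 1 / 2) * (((π ω (Y ω) : ℕ) : ℝ) / (V - 1) - 1 / 2) ∂μ
      = (V.factorial:ℝ)⁻¹ * ((1 - T) * ((V.factorial:ℝ)/V) * S2) := by
    have hm := master μ hμp hsum π u hu hunif hπunif hindep (fun x => x - 1/2)
      (continuous_id.sub continuous_const)
      (B₀ := 1) (fun y hy => by rw [abs_le]; constructor <;>
        [linarith [hy.1] ; linarith [hy.2]]) (by norm_num)
      (fun p r => (((r:ℕ)):ℝ)/((V:ℝ)-1) - 1/2)
    have heq : ∫ ω, (u ω - 1 / 2) * (((π ω (Y ω) : ℕ) : ℝ) / (V - 1) - 1 / 2) ∂μ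
        = ∫ ω, (fun x => x - 1/2) (u ω) *
            (fun (p : Equiv.Perm (Fin V)) (r : Fin V) => (((r:ℕ)):ℝ)/((V:ℝ)-1) - 1/2)
              (π ω) (mrk μp (π ω) (u ω)) ∂μ := by
      apply integral_congr_ae
      filter_upwards with ω
      rw [hbridge ω]
    rw [heq, hm]
    have hval : ∀ (p : Equiv.Perm (Fin V)) (r : Fin V),
        (∫ x in Set.Ioc (Slo μp p r) (Shi μp p r),
          (fun x => x - 1/2) x * (fun (p : Equiv.Perm (Fin V)) (r : Fin V) =>
            (((r:ℕ)):ℝ)/((V:ℝ)-1) - 1/2) p r)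
        = qv μp p r * (Slo μp p r + qv μp p r/2 - 1/2) * (((r:ℕ):ℝ)/((V:ℝ)-1) - 1/2) := by
      intro p r
      rw [eval_lin _ _ _ (hab p r), Shi_eq_Slo_add]
      ring
    rw [Finset.sum_congr rfl (fun p _ => Finset.sum_congr rfl (fun r _ => hval p r)),
      claim1 hV hsum]
  -- Integral 2
  have hE2 : ∫ ω, (1 - μp (Y ω)) * (((π ω (Y ω) : ℕ) : ℝ) / (V - 1) - 1 / 2) ^ 2 ∂μ
      = (V.factorial:ℝ)⁻¹ * ((1 - T) * ((V.factorial:ℝ)/V) * S2) := by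
    have hm := master μ hμp hsum π u hu hunif hπunif hindep (fun _ => (1:ℝ))
      continuous_const
      (B₀ := 1) (fun y hy => by norm_num) (by norm_num)
      (fun p r => (1 - qv μp p r) * ((((r:ℕ)):ℝ)/((V:ℝ)-1) - 1/2)^2)
    have heq : ∫ ω, (1 - μp (Y ω)) * (((π ω (Y ω) : ℕ) : ℝ) / (V - 1) - 1 / 2) ^ 2 ∂μ
        = ∫ ω, (fun _ => (1:ℝ)) (u ω) *
            (fun (p : Equiv.Perm (Fin V)) (r : Fin V) =>
              (1 - qv μp p r) * ((((r:ℕ)):ℝ)/((V:ℝ)-1) - 1/2)^2)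
              (π ω) (mrk μp (π ω) (u ω)) ∂μ := by
      apply integral_congr_ae
      filter_upwards with ω
      rw [hbridge ω, hμY ω]
      ring
    rw [heq, hm]
    have hval : ∀ (p : Equiv.Perm (Fin V)) (r : Fin V),
        (∫ x in Set.Ioc (Slo μp p r) (Shi μp p r),
          (fun _ => (1:ℝ)) x * (fun (p : Equiv.Perm (Fin V)) (r : Fin V) =>
            (1 - qv μp p r) * ((((r:ℕ)):ℝ)/((V:ℝ)-1) - 1/2)^2) p r)
        = qv μp p r * ((1 - qv μp p r) * ((((r:ℕ)):ℝ)/((V:ℝ)-1) - 1/2)^2) := by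
      intro p r
      have h1 : ∀ x : ℝ, (fun _ => (1:ℝ)) x * (fun (p : Equiv.Perm (Fin V)) (r : Fin V) =>
          (1 - qv μp p r) * ((((r:ℕ)):ℝ)/((V:ℝ)-1) - 1/2)^2) p r
          = (1 - qv μp p r) * ((((r:ℕ)):ℝ)/((V:ℝ)-1) - 1/2)^2 := fun x => one_mul _
      rw [MeasureTheory.setIntegral_congr_fun measurableSet_Ioc (fun x _ => h1 x),
        eval_const _ _ _ (hab p r), Shi_eq_Slo_add]
      ring
    rw [Finset.sum_congr rfl (fun p _ => Finset.sum_congr rfl (fun r _ => hval p r)),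
      claim2 hsum]
  -- Integral 3
  have hE3 : ∫ ω, (1 - μp (Y ω)) ∂μ = (V.factorial:ℝ)⁻¹ * ((V.factorial:ℝ) * (1 - T)) := by
    have hm := master μ hμp hsum π u hu hunif hπunif hindep (fun _ => (1:ℝ))
      continuous_const
      (B₀ := 1) (fun y hy => by norm_num) (by norm_num)
      (fun p r => 1 - qv μp p r)
    have heq : ∫ ω, (1 - μp (Y ω)) ∂μ
        = ∫ ω, (fun _ => (1:ℝ)) (u ω) *
            (fun (p : Equiv.Perm (Fin V)) (r : Fin V) => 1 - qv μp p r)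
              (π ω) (mrk μp (π ω) (u ω)) ∂μ := by
      apply integral_congr_ae
      filter_upwards with ω
      rw [hμY ω]
      ring
    rw [heq, hm]
    have hval : ∀ (p : Equiv.Perm (Fin V)) (r : Fin V),
        (∫ x in Set.Ioc (Slo μp p r) (Shi μp p r),
          (fun _ => (1:ℝ)) x * (fun (p : Equiv.Perm (Fin V)) (r : Fin V) =>
            1 - qv μp p r) p r)
        = qv μp p r * (1 - qv μp p r) := by
      intro p r
      have h1 : ∀ x : ℝ, (fun _ => (1:ℝ)) x * (fun (p : Equiv.Perm (Fin V)) (r : Fin V) =>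
          1 - qv μp p r) p r = 1 - qv μp p r := fun x => one_mul _
      rw [MeasureTheory.setIntegral_congr_fun measurableSet_Ioc (fun x _ => h1 x),
        eval_const _ _ _ (hab p r), Shi_eq_Slo_add]
      ring
    rw [Finset.sum_congr rfl (fun p _ => Finset.sum_congr rfl (fun r _ => hval p r)),
      claim3 hsum]
  -- basic bounds
  have hle1 : ∀ k, μp k ≤ 1 := fun k => by
    rw [← hsum]
    exact Finset.single_le_sum (fun i _ => hμp i) (Finset.mem_univ k)
  have hTle : T ≤ 1 := by
    rw [hT, ← hsum]
    exact Finset.sum_le_sum (fun k _ => by nlinarith [hμp k, hle1 k])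
  have hS2nn : 0 ≤ S2 := Finset.sum_nonneg (fun r _ => sq_nonneg _)
  refine ⟨by rw [hE1, hE2], ?_, ?_, ?_⟩
  · rw [hE1, hE3, hC]
    field_simp
  · rw [hE1]
    apply mul_nonneg (inv_nonneg.mpr (le_of_lt hNpos))
    apply mul_nonneg (mul_nonneg (by linarith) (div_nonneg (le_of_lt hNpos) (le_of_lt hVpos)))
    exact hS2nn
  · intro hnp
    have hlt1 : ∀ k, μp k < 1 := fun k => lt_of_le_of_ne (hle1 k) (fun h => hnp ⟨k, h⟩)
    have hk0 : ∃ k, 0 < μp k := by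
      by_contra h
      push_neg at h
      have h0 : ∑ k, μp k = 0 := Finset.sum_eq_zero (fun k _ => le_antisymm (h k) (hμp k))
      rw [hsum] at h0
      norm_num at h0
    obtain ⟨k₀, hk₀⟩ := hk0
    have hTlt : T < 1 := by
      rw [hT, ← hsum]
      exact Finset.sum_lt_sum (fun k _ => by nlinarith [hμp k, hle1 k])
        ⟨k₀, Finset.mem_univ _, by nlinarith [hlt1 k₀]⟩
    have hS2pos : 0 < S2 := by
      have hr0 : (((((⟨0, NeZero.pos V⟩ : Fin V):ℕ)):ℝ)/((V:ℝ)-1) - 1/2)^2 = 1/4 := by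
        norm_num
      calc (0:ℝ) < 1/4 := by norm_num
        _ = (((((⟨0, NeZero.pos V⟩ : Fin V):ℕ)):ℝ)/((V:ℝ)-1) - 1/2)^2 := hr0.symm
        _ ≤ S2 := Finset.single_le_sum
            (f := fun r : Fin V => (((r:ℕ):ℝ)/((V:ℝ)-1) - 1/2)^2)
            (fun r _ => sq_nonneg _) (Finset.mem_univ _)
    rw [hE1]
    apply mul_pos (inv_pos.mpr hNpos)
    exact mul_pos (mul_pos (by linarith) (div_pos hNpos hVpos)) hS2pos
end
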